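/- Let X be a real Lévy process such that |X| is not a subordinator and such that the law of X_t is atomless for each t > 0. Let f:(0,∞)→(0,∞) be a continuous nondecreasing function with lim_{t→0+} f(t) > 0, and set T_f := inf{t>0 : X_t > f(t)}. Then P(T_f > 0) = 1 and the process X can neither jump onto the graph {(u,f(u)) : u>0} nor jump from this graph at time T_f: P(X_{T_f−} = f(T_f) < X_{T_f}, T_f < ∞) = 0 and P(X_{T_f−} < X_{T_f} = f(T_f), T_f < ∞) = 0. -/

import Mathlib

open MeasureTheory ProbabilityTheory Filter Set Function
open scoped ENNReal NNReal Topology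

/-!
Positivity of `T_f` is right-continuity at `0`: near time `0` the path stays below `f₀ / 2`
while `f` stays above it. Both jump statements follow from a stronger fact: almost surely `X`
never jumps upward onto, or away from, the graph of a continuous `f` at a time `t > 0`.

Fix a window `(α, β]` with `α > 0`, a jump size `ρ` and a tolerance `η`. On the uniform grid
with `n` steps, such a jump produces for all large `n` an increment `≥ ρ` with an endpoint
`η`-close to the graph. The increment is independent of the value at its left endpoint, and the
laws of `X_s`, `s ≥ α`, put uniformly little mass `c(η)` on `η`-balls (`X_α` is atomless and
`X_s - X_α` is independent of it), so this event has probability at most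
`2 c(η) · n P(X_{(β-α)/n} ≥ ρ)`. Finally `n P(X_{(β-α)/n} ≥ ρ)` is bounded along a subsequence:
otherwise, the grid increments being i.i.d., the number of them that are `≥ ρ` would tend to
infinity in probability, whereas a càdlàg path has only boundedly many such increments.
-/

noncomputable section

/-- A (non-killed, i.e. with infinite lifetime) Lévy process with values in a normed
measurable abelian group `E`: it starts from `0`, has càdlàg paths, and has stationary
independent increments. -/
structure IsLevyProcess {Ω : Type*} [MeasurableSpace Ω] (P : Measure Ω)
    {E : Type*} [NormedAddCommGroup E] [MeasurableSpace E] [BorelSpace E]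
    (L : ℝ → Ω → E) : Prop where
  measurable : ∀ t, Measurable (L t)
  init : ∀ᵐ ω ∂P, L 0 ω = 0
  right_cont : ∀ ω, ∀ t : ℝ, 0 ≤ t →
    Tendsto (fun s => L s ω) (nhdsWithin t (Ici t)) (nhds (L t ω))
  left_lim : ∀ ω, ∀ t : ℝ, 0 < t →
    Tendsto (fun s => L s ω) (nhdsWithin t (Iio t)) (nhds (leftLim (fun s => L s ω) t))
  stationary : ∀ s t : ℝ, 0 ≤ s → s ≤ t →
    Measure.map (fun ω => L t ω - L s ω) P = Measure.map (fun ω => L (t - s) ω) P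
  indep : ∀ (n : ℕ) (u : Fin (n + 1) → ℝ), Monotone u → 0 ≤ u 0 →
    iIndepFun
      (fun i : Fin n => fun ω => L (u i.succ) ω - L (u i.castSucc) ω) P

end
noncomputable section

/-- The first passage time `T_f = inf {t > 0 : X_t > f(t)}` of a real process above the graph
of a function `f`, as an element of `ℝ≥0∞` (equal to `∞` if there is no crossing). -/
def firstPassage (f : ℝ → ℝ) {Ω : Type*} (X : ℝ → Ω → ℝ) (ω : Ω) : ℝ≥0∞ :=
  sInf {s : ℝ≥0∞ | ∃ t : ℝ, 0 < t ∧ f t < X t ω ∧ s = ENNReal.ofReal t}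

open Metric
open scoped Finset

def gridPoint (α β : ℝ) (n i : ℕ) : ℝ := α + i * ((β - α) / n)

def gridIncrement (g : ℝ → ℝ) (α β : ℝ) (n i : ℕ) : ℝ :=
  g (gridPoint α β n (i + 1)) - g (gridPoint α β n i)

def largeIncrementNearGraph {Ω : Type*} (X : ℝ → Ω → ℝ) (f : ℝ → ℝ) (α β ρ η : ℝ) (n : ℕ) :
    Set Ω :=
  ⋃ i : Fin n,
    {ω | (X (gridPoint α β n (i + 1)) ω ∈ closedBall (f (gridPoint α β n i)) η ∨
        X (gridPoint α β n i) ω ∈ closedBall (f (gridPoint α β n i)) η) ∧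
      ρ ≤ X (gridPoint α β n (i + 1)) ω - X (gridPoint α β n i) ω}

theorem measure_liminf_le_liminf_measure {α : Type*} [MeasurableSpace α] (μ : Measure α)
    (s : ℕ → Set α) : μ (liminf s atTop) ≤ liminf (fun n => μ (s n)) atTop := by
  have hmono : Monotone fun m => ⋂ n ≥ m, s n :=
    fun _ _ hmm' => biInter_mono (fun _ hn => le_trans hmm' hn) fun _ _ => subset_rfl
  rw [liminf_eq_iSup_iInf_of_nat, liminf_eq_iSup_iInf_of_nat, iSup_eq_iUnion]
  simp only [iInf_eq_iInter]
  rw [hmono.measure_iUnion]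
  exact iSup_mono fun m => le_iInf₂ fun n hn => measure_mono (biInter_subset_of_mem hn)

theorem exists_pos_forall_measure_closedBall_le {α : Type*} [MetricSpace α] [MeasurableSpace α]
    [OpensMeasurableSpace α] (μ : Measure α) [IsFiniteMeasure μ] [NullSingletonClass μ]
    (hμ : IsTightMeasureSet {μ}) {c : ℝ≥0∞} (hc : 0 < c) :
    ∃ γ > 0, ∀ y, μ (closedBall y γ) ≤ c := by
  obtain ⟨K, hK, hKc⟩ := isTightMeasureSet_iff_exists_isCompact_measure_compl_le.mp hμ c hc
  have hlocal : ∀ x, ∃ r > 0, μ (closedBall x r) ≤ c := by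
    intro x
    have h := tendsto_measure_cthickening_of_isClosed (μ := μ) ⟨1, one_pos, measure_ne_top _ _⟩
      (isClosed_singleton (x := x))
    rw [measure_singleton] at h
    obtain ⟨r, hr, hr0⟩ := ((h.mono_left nhdsWithin_le_nhds).eventually (ge_mem_nhds hc)).and
      (self_mem_nhdsWithin (s := Ioi (0 : ℝ))) |>.exists
    exact ⟨r, hr0, by rwa [← cthickening_singleton x (le_of_lt hr0)]⟩
  choose r hr0 hr using hlocal
  obtain ⟨δ, hδ, hleb⟩ := lebesgue_number_lemma_of_metric hK (fun x => isOpen_ball (x := x))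
    (fun x _ => mem_iUnion.2 ⟨x, mem_ball_self (hr0 x)⟩)
  -- a ball of radius `δ / 3` either misses `K` or lies in a Lebesgue ball around a point of `K`
  refine ⟨δ / 3, by positivity, fun y => ?_⟩
  by_cases hy : ∃ z ∈ K, dist y z ≤ δ / 3
  · obtain ⟨z, hzK, hyz⟩ := hy
    obtain ⟨x, hx⟩ := hleb z hzK
    refine le_trans (measure_mono fun w hw => ball_subset_closedBall (hx ?_)) (hr x)
    rw [mem_closedBall] at hw
    rw [mem_ball]
    linarith [dist_triangle w y z]
  · refine le_trans (measure_mono fun w hw hwK => hy ⟨w, hwK, ?_⟩) (hKc μ rfl)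
    rw [dist_comm]
    exact hw

theorem ProbabilityTheory.IndepFun.measure_mem_and_mem_le {Ω α β : Type*} [MeasurableSpace Ω]
    [MeasurableSpace α] [MeasurableSpace β] {P : Measure Ω} [IsFiniteMeasure P] {U : Ω → α}
    {V : Ω → β} (h : IndepFun U V P) (hU : Measurable U) (hV : Measurable V)
    {S : Set (α × β)} (hS : MeasurableSet S) {B : Set β} (hB : MeasurableSet B) {c : ℝ≥0∞}
    (hc : ∀ v, P {ω | (U ω, v) ∈ S} ≤ c) :
    P {ω | (U ω, V ω) ∈ S ∧ V ω ∈ B} ≤ c * P {ω | V ω ∈ B} := by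
  have hSB : MeasurableSet (S ∩ Prod.snd ⁻¹' B) := hS.inter (measurable_snd hB)
  have hslice : ∀ v, (P.map U) ((fun u => (u, v)) ⁻¹' (S ∩ Prod.snd ⁻¹' B))
      ≤ B.indicator (fun _ => c) v := by
    intro v
    by_cases hv : v ∈ B
    · rw [indicator_of_mem hv, Measure.map_apply hU (measurable_prodMk_right hSB)]
      exact le_trans (measure_mono fun ω hω => hω.1) (hc v)
    · simp [hv, preimage_preimage]
  calc P {ω | (U ω, V ω) ∈ S ∧ V ω ∈ B}
      = (P.map fun ω => (U ω, V ω)) (S ∩ Prod.snd ⁻¹' B) :=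
        (Measure.map_apply (hU.prodMk hV) hSB).symm
    _ = ∫⁻ v, (P.map U) ((fun u => (u, v)) ⁻¹' (S ∩ Prod.snd ⁻¹' B)) ∂(P.map V) := by
        rw [(indepFun_iff_map_prod_eq_prod_map_map hU.aemeasurable hV.aemeasurable).1 h,
          Measure.prod_apply_symm hSB]
    _ ≤ ∫⁻ v, B.indicator (fun _ => c) v ∂(P.map V) := lintegral_mono hslice
    _ = c * P {ω | V ω ∈ B} := by
        rw [lintegral_indicator_const hB, Measure.map_apply hV hB]
        rfl

theorem measure_card_filter_mem_lt_le {Ω β : Type*} [MeasurableSpace Ω] [MeasurableSpace β]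
    {P : Measure Ω} {n : ℕ} {Y : Fin n → Ω → β} (hY : iIndepFun Y P) {B : Set β}
    [DecidablePred (· ∈ B)] (hB : MeasurableSet B) {q : ℝ≥0∞} (hq : ∀ i, P (Y i ⁻¹' Bᶜ) = q)
    (K : ℕ) : P {ω | #{i | Y i ω ∈ B} < K} ≤ K * q ^ (n / K) := by
  set s := n / K
  have hlt : ∀ j : Fin K, ∀ m ∈ Finset.Ico (j * s) (j * s + s), m < n := by
    intro j m hm
    have : (j + 1) * s ≤ K * s := Nat.mul_le_mul_right s j.2
    have : K * s ≤ n := Nat.mul_div_le n K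
    rw [Finset.mem_Ico] at hm
    nlinarith
  set block : Fin K → Finset (Fin n) := fun j =>
    (Finset.Ico (j * s) (j * s + s)).attachFin (hlt j)
  -- if fewer than `K` indices are hits, one of the `K` disjoint blocks of length `s` has none
  have hcover : {ω | #{i | Y i ω ∈ B} < K} ⊆ ⋃ j, ⋂ i ∈ block j, Y i ⁻¹' Bᶜ := by
    intro ω hω
    obtain ⟨j, hjK, hj⟩ := Finset.exists_mem_notMem_of_card_lt_card
      (s := (Finset.univ.filter fun i => Y i ω ∈ B).image fun i : Fin n => (i : ℕ) / s)
      (t := Finset.range K)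
      (by rw [Finset.card_range]; exact lt_of_le_of_lt Finset.card_image_le hω)
    refine mem_iUnion.2 ⟨⟨j, Finset.mem_range.1 hjK⟩, mem_iInter₂.2 fun i hi hiB => hj ?_⟩
    rw [Finset.mem_attachFin, Finset.mem_Ico] at hi
    exact Finset.mem_image.2
      ⟨i, by simpa using hiB, Nat.div_eq_of_lt_le (by linarith) (by linarith)⟩
  calc P {ω | #{i | Y i ω ∈ B} < K}
      ≤ ∑ j, P (⋂ i ∈ block j, Y i ⁻¹' Bᶜ) :=
        (measure_mono hcover).trans (measure_iUnion_fintype_le _ _)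
    _ = ∑ j : Fin K, q ^ s := by
        refine Fintype.sum_congr _ _ fun j => ?_
        rw [hY.meas_biInter fun i _ => ⟨Bᶜ, hB.compl, rfl⟩,
          Finset.prod_congr rfl fun i _ => hq i, Finset.prod_const, Finset.card_attachFin,
          Nat.card_Ico, Nat.add_sub_cancel_left]
    _ = K * q ^ s := by simp

theorem ENNReal.tendsto_one_sub_pow_div_atTop {p : ℕ → ℝ≥0∞} (hp : ∀ n, p n ≤ 1)
    (h : Tendsto (fun n : ℕ => (n : ℝ≥0∞) * p n) atTop (𝓝 ∞)) {K : ℕ} (hK : 0 < K) :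
    Tendsto (fun n => (1 - p n) ^ (n / K)) atTop (𝓝 0) := by
  have hp_ne_top : ∀ n, p n ≠ ∞ := fun n => ne_top_of_le_ne_top ENNReal.one_ne_top (hp n)
  set x : ℕ → ℝ := fun n => (p n).toReal
  have hx0 : ∀ n, 0 ≤ x n := fun n => ENNReal.toReal_nonneg
  have hx1 : ∀ n, x n ≤ 1 := fun n =>
    ENNReal.toReal_le_of_le_ofReal zero_le_one (by simpa using hp n)
  have hnx : Tendsto (fun n : ℕ => (n : ℝ) * x n) atTop atTop := by
    refine tendsto_atTop.2 fun b => ?_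
    filter_upwards [ENNReal.tendsto_nhds_top_iff_nnreal.1 h b.toNNReal] with n hn
    have := (ENNReal.toReal_lt_toReal ENNReal.coe_ne_top
      (ENNReal.mul_ne_top (ENNReal.natCast_ne_top n) (hp_ne_top n))).2 hn
    rw [ENNReal.toReal_mul, ENNReal.toReal_natCast, ENNReal.coe_toReal] at this
    exact (Real.le_coe_toNNReal b).trans this.le
  have hexp : Tendsto (fun n => x n * (n / K : ℕ)) atTop atTop := by
    refine tendsto_atTop_mono (fun n => ?_) ((hnx.atTop_div_const (Nat.cast_pos.2 hK)).atTop_add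
      (tendsto_const_nhds (x := (-1 : ℝ))))
    have hn : (n : ℝ) < (n / K : ℕ) * K + K := by exact_mod_cast Nat.lt_div_mul_add hK
    have hK' : (0 : ℝ) < K := Nat.cast_pos.2 hK
    rw [div_add' _ _ _ hK'.ne', div_le_iff₀ hK']
    nlinarith [hx0 n, hx1 n]
  have hle : ∀ n, (1 - p n) ^ (n / K) ≤ ENNReal.ofReal (Real.exp (-(x n * (n / K : ℕ)))) := by
    intro n
    rw [← ENNReal.ofReal_toReal (hp_ne_top n), ← ENNReal.ofReal_one,
      ← ENNReal.ofReal_sub _ (hx0 n), ← ENNReal.ofReal_pow (by linarith [hx1 n])]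
    refine ENNReal.ofReal_le_ofReal ?_
    rw [mul_comm, neg_mul_eq_mul_neg, Real.exp_nat_mul]
    exact pow_le_pow_left₀ (by linarith [hx1 n]) (Real.one_sub_le_exp_neg _) _
  refine tendsto_of_tendsto_of_tendsto_of_le_of_le tendsto_const_nhds ?_ (fun _ => zero_le) hle
  simpa using ENNReal.tendsto_ofReal (Real.tendsto_exp_neg_atTop_nhds_zero.comp hexp)

section Grid

variable {α β t : ℝ} {n : ℕ}

theorem gridPoint_succ_sub (α β : ℝ) (n i : ℕ) :
    gridPoint α β n (i + 1) - gridPoint α β n i = (β - α) / n := by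
  simp only [gridPoint]
  push_cast
  ring

theorem gridPoint_mono (hαβ : α ≤ β) (n : ℕ) : Monotone (gridPoint α β n) := by
  intro i j hij
  have : 0 ≤ (β - α) / n := div_nonneg (sub_nonneg.2 hαβ) n.cast_nonneg
  simp only [gridPoint]
  gcongr

theorem le_gridPoint (hαβ : α ≤ β) {i : ℕ} : α ≤ gridPoint α β n i := by
  simpa [gridPoint] using gridPoint_mono hαβ n (Nat.zero_le i)

theorem gridPoint_mem_Icc (hαβ : α ≤ β) {i : ℕ} (hi : i ≤ n) :
    gridPoint α β n i ∈ Icc α β := by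
  refine ⟨le_gridPoint hαβ, ?_⟩
  rcases n.eq_zero_or_pos with rfl | hn
  · simpa [gridPoint] using hαβ
  · refine (gridPoint_mono hαβ n hi).trans_eq ?_
    simp only [gridPoint]
    field_simp
    ring

theorem eq_of_mem_Ioc_gridPoint (hαβ : α ≤ β) {i j : ℕ}
    (hi : t ∈ Ioc (gridPoint α β n i) (gridPoint α β n (i + 1)))
    (hj : t ∈ Ioc (gridPoint α β n j) (gridPoint α β n (j + 1))) : i = j := by
  by_contra hne
  rcases Nat.lt_or_gt_of_ne hne with h | h
  · exact (hj.1.trans_le hi.2).not_ge (gridPoint_mono hαβ n h)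
  · exact (hi.1.trans_le hj.2).not_ge (gridPoint_mono hαβ n h)

theorem exists_gridPoint_lt_le (hn : 0 < n) (ht : t ∈ Ioc α β) :
    ∃ i < n, gridPoint α β n i < t ∧ t ≤ gridPoint α β n (i + 1) := by
  have hh : 0 < (β - α) / n := div_pos (by linarith [ht.1, ht.2]) (Nat.cast_pos.2 hn)
  set x := (t - α) / ((β - α) / n)
  have hx : 0 < x := div_pos (by linarith [ht.1]) hh
  have hc : 1 ≤ ⌈x⌉₊ := Nat.one_le_iff_ne_zero.2 (Nat.ceil_pos.2 hx).ne'
  have hcast : ((⌈x⌉₊ - 1 : ℕ) : ℝ) = ⌈x⌉₊ - 1 := by rw [Nat.cast_sub hc, Nat.cast_one]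
  have hxt : α + x * ((β - α) / n) = t := by rw [div_mul_cancel₀ _ hh.ne']; ring
  refine ⟨⌈x⌉₊ - 1, ?_, ?_, ?_⟩
  · have : x ≤ n := by
      rw [div_le_iff₀ hh]
      field_simp
      linarith [ht.2]
    have := Nat.ceil_le.2 this
    omega
  · rw [gridPoint, hcast, ← hxt]
    nlinarith [Nat.ceil_lt_add_one hx.le]
  · rw [gridPoint, Nat.cast_add, hcast, Nat.cast_one, ← hxt]
    nlinarith [Nat.le_ceil x]

theorem eventually_exists_gridPoint (ht : t ∈ Ioc α β) {p q : ℝ → Prop}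
    (hp : ∀ᶠ s in 𝓝[<] t, p s) (hq : ∀ᶠ s in 𝓝[≥] t, q s) :
    ∀ᶠ n in atTop, ∃ i < n, p (gridPoint α β n i) ∧ q (gridPoint α β n (i + 1)) := by
  obtain ⟨l, hl, hlp⟩ := mem_nhdsLT_iff_exists_Ioo_subset.1 hp
  obtain ⟨u, hu, huq⟩ := mem_nhdsGE_iff_exists_Ico_subset.1 hq
  have hmesh := (tendsto_const_div_atTop_nhds_zero_nat (β - α)).eventually
    (gt_mem_nhds (lt_min (sub_pos.2 hl) (sub_pos.2 hu)))
  filter_upwards [hmesh, eventually_gt_atTop 0] with n hn hn0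
  obtain ⟨i, hin, hit, hti⟩ := exists_gridPoint_lt_le hn0 ht
  have hstep := gridPoint_succ_sub α β n i
  refine ⟨i, hin, hlp ⟨?_, hit⟩, huq ⟨hti, ?_⟩⟩ <;>
    linarith [min_le_left (t - l) (u - t), min_le_right (t - l) (u - t)]

end Grid

section Cadlag

variable {g : ℝ → ℝ} {α β ρ : ℝ}

theorem exists_finset_dist_lt_of_cadlag (hr : ∀ t ∈ Icc α β, Tendsto g (𝓝[≥] t) (𝓝 (g t)))
    (hl : ∀ t ∈ Icc α β, ∃ L, Tendsto g (𝓝[<] t) (𝓝 L)) (hρ : 0 < ρ) :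
    ∃ F : Finset ℝ, ∃ δ > 0, ∀ u ∈ Icc α β, ∀ v, u ≤ v → v - u < δ →
      (∀ w ∈ F, w ∉ Ioc u v) → dist (g v) (g u) < ρ := by
  have hwindow : ∀ t ∈ Icc α β, ∃ l < t, ∃ r > t, ∃ L,
      Ico t r ⊆ g ⁻¹' ball (g t) (ρ / 2) ∧ Ioo l t ⊆ g ⁻¹' ball L (ρ / 2) := by
    intro t ht
    obtain ⟨L, hL⟩ := hl t ht
    obtain ⟨r, hr', hrs⟩ := mem_nhdsGE_iff_exists_Ico_subset.1
      ((hr t ht).eventually (ball_mem_nhds _ (half_pos hρ)))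
    obtain ⟨l, hl', hls⟩ := mem_nhdsLT_iff_exists_Ioo_subset.1
      (hL.eventually (ball_mem_nhds L (half_pos hρ)))
    exact ⟨l, hl', r, hr', L, hrs, hls⟩
  choose! l hl r hr L hright hleft using hwindow
  obtain ⟨F, hFI, hcover⟩ := isCompact_Icc.elim_nhds_subcover (fun t => Ioo (l t) (r t))
    fun t ht => Ioo_mem_nhds (hl t ht) (hr t ht)
  obtain ⟨δ, hδ, hleb⟩ := lebesgue_number_lemma_of_metric (c := fun t : F => Ioo (l t) (r t))
    isCompact_Icc (fun _ => isOpen_Ioo) fun x hx => by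
      obtain ⟨t, htF, hxt⟩ := mem_iUnion₂.1 (hcover hx)
      exact mem_iUnion.2 ⟨⟨t, htF⟩, hxt⟩
  refine ⟨F, δ, hδ, fun u hu v huv hvu hF => ?_⟩
  obtain ⟨⟨t, htF⟩, hball⟩ := hleb u hu
  have hu' := hball (mem_ball_self hδ)
  have hv' := hball (show v ∈ ball u δ by
    rw [mem_ball, Real.dist_eq, abs_lt]
    constructor <;> linarith)
  -- `t ∈ F` is not in `(u, v]`, so `u` and `v` lie on the same side of `t` in its window
  rcases le_or_gt t u with htu | hut
  · exact (dist_triangle_right _ _ (g t)).trans_lt (by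
      linarith [mem_ball.1 (hright t (hFI t htF) ⟨htu.trans huv, hv'.2⟩),
        mem_ball.1 (hright t (hFI t htF) ⟨htu, hu'.2⟩)])
  · have hvt : v < t := lt_of_not_ge fun htv => hF t htF ⟨hut, htv⟩
    exact (dist_triangle_right _ _ (L t)).trans_lt (by
      linarith [mem_ball.1 (hleft t (hFI t htF) ⟨hv'.1, hvt⟩),
        mem_ball.1 (hleft t (hFI t htF) ⟨hu'.1, hut⟩)])

theorem exists_eventually_card_le_of_cadlag (hαβ : α ≤ β)
    (hr : ∀ t ∈ Icc α β, Tendsto g (𝓝[≥] t) (𝓝 (g t)))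
    (hl : ∀ t ∈ Icc α β, ∃ L, Tendsto g (𝓝[<] t) (𝓝 L)) (hρ : 0 < ρ) :
    ∃ K : ℕ, ∀ᶠ n in atTop, #{i : Fin n | ρ ≤ gridIncrement g α β n i} ≤ K := by
  classical
  obtain ⟨F, δ, hδ, hF⟩ := exists_finset_dist_lt_of_cadlag hr hl hρ
  refine ⟨#F, ?_⟩
  filter_upwards [(tendsto_const_div_atTop_nhds_zero_nat (β - α)).eventually (gt_mem_nhds hδ)]
    with n hn
  set hit : ℝ → Finset (Fin n) := fun w =>
    {i | w ∈ Ioc (gridPoint α β n i) (gridPoint α β n (i + 1))}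
  -- every large increment straddles a point of `F`, and each point is straddled only once
  have hsub : ({i : Fin n | ρ ≤ gridIncrement g α β n i} : Finset (Fin n)) ⊆ F.biUnion hit := by
    intro i hi
    rw [Finset.mem_filter] at hi
    by_contra hnot
    refine (hF _ (gridPoint_mem_Icc hαβ i.2.le) _ (gridPoint_mono hαβ n (Nat.le_succ i))
      (by rwa [gridPoint_succ_sub]) fun w hw hwi => hnot (Finset.mem_biUnion.2
        ⟨w, hw, by simpa [hit] using hwi⟩)).not_ge ?_
    rw [Real.dist_eq]
    exact hi.2.trans (le_abs_self _)
  calc #{i : Fin n | ρ ≤ gridIncrement g α β n i}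
      ≤ #(F.biUnion hit) := Finset.card_le_card hsub
    _ ≤ ∑ w ∈ F, #(hit w) := Finset.card_biUnion_le
    _ ≤ ∑ _w ∈ F, 1 := Finset.sum_le_sum fun w _ => Finset.card_le_one.2 fun i hi j hj =>
        Fin.ext (eq_of_mem_Ioc_gridPoint hαβ (by simpa [hit] using hi) (by simpa [hit] using hj))
    _ = #F := by simp

end Cadlag

theorem eventually_exists_gridIncrement_near_graph {g f : ℝ → ℝ} {α β t L ρ η : ℝ}
    (ht : t ∈ Ioc α β) (hr : Tendsto g (𝓝[≥] t) (𝓝 (g t))) (hl : Tendsto g (𝓝[<] t) (𝓝 L))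
    (hf : Tendsto f (𝓝[<] t) (𝓝 (f t))) (hρ : ρ < g t - L) (hgraph : g t = f t ∨ L = f t)
    (hη : 0 < η) :
    ∀ᶠ n in atTop, ∃ i < n,
      (g (gridPoint α β n (i + 1)) ∈ closedBall (f (gridPoint α β n i)) η ∨
        g (gridPoint α β n i) ∈ closedBall (f (gridPoint α β n i)) η) ∧
      ρ ≤ gridIncrement g α β n i := by
  set ε := min (η / 2) ((g t - L - ρ) / 2)
  have hε : 0 < ε := lt_min (half_pos hη) (by linarith)
  have hεη := min_le_left (η / 2) ((g t - L - ρ) / 2)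
  have hερ := min_le_right (η / 2) ((g t - L - ρ) / 2)
  filter_upwards [eventually_exists_gridPoint ht
    ((hl.eventually (ball_mem_nhds L hε)).and (hf.eventually (ball_mem_nhds (f t) hε)))
    (hr.eventually (ball_mem_nhds (g t) hε))] with n ⟨i, hin, ⟨hgl, hfl⟩, hgr⟩
  rw [Real.dist_eq, abs_lt] at hgl hfl hgr
  refine ⟨i, hin, ?_, ?_⟩
  · simp only [mem_closedBall, Real.dist_eq, abs_le]
    rcases hgraph with h | h
    · exact Or.inl ⟨by linarith, by linarith⟩
    · exact Or.inr ⟨by linarith, by linarith⟩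
  · simp only [gridIncrement]
    linarith

theorem firstPassage_pos {Ω : Type*} {f : ℝ → ℝ} {X : ℝ → Ω → ℝ} {ω : Ω} {f₀ : ℝ}
    (hf₀ : 0 < f₀) (hf : Tendsto f (𝓝[>] 0) (𝓝 f₀)) (hX : Tendsto (X · ω) (𝓝[>] 0) (𝓝 0)) :
    0 < firstPassage f X ω := by
  obtain ⟨δ, hδ, hsub⟩ := mem_nhdsGT_iff_exists_Ioo_subset.1
    ((hX.eventually (gt_mem_nhds (half_pos hf₀))).and
      (hf.eventually (lt_mem_nhds (half_lt_self hf₀))))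
  refine (ENNReal.ofReal_pos.2 hδ).trans_le (le_sInf ?_)
  rintro _ ⟨t, ht, hcross, rfl⟩
  refine ENNReal.ofReal_le_ofReal (le_of_not_gt fun htδ => ?_)
  obtain ⟨h1, h2⟩ := hsub ⟨ht, htδ⟩
  linarith

namespace IsLevyProcess

variable {Ω : Type*} [MeasurableSpace Ω] {P : Measure Ω} {X : ℝ → Ω → ℝ}

theorem measure_sub_mem (hX : IsLevyProcess P X) {s t : ℝ} (hs : 0 ≤ s) (hst : s ≤ t)
    {B : Set ℝ} (hB : MeasurableSet B) :
    P {ω | X t ω - X s ω ∈ B} = P {ω | X (t - s) ω ∈ B} := by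
  calc P {ω | X t ω - X s ω ∈ B}
      = P.map (fun ω => X t ω - X s ω) B :=
        (Measure.map_apply ((hX.measurable t).sub (hX.measurable s)) hB).symm
    _ = P.map (X (t - s)) B := by rw [hX.stationary s t hs hst]
    _ = P {ω | X (t - s) ω ∈ B} := Measure.map_apply (hX.measurable _) hB

theorem indepFun_sub (hX : IsLevyProcess P X) {s t : ℝ} (hs : 0 ≤ s) (hst : s ≤ t) :
    IndepFun (X s) (fun ω => X t ω - X s ω) P := by
  have hmono : Monotone ![0, s, t] := by
    intro i j hij
    fin_cases i <;> fin_cases j <;> simp_all [Fin.le_def]; linarith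
  have h := (hX.indep 2 ![0, s, t] hmono le_rfl).indepFun (i := 0) (j := 1) (by decide)
  refine IndepFun.congr h ?_ (by rfl)
  filter_upwards [hX.init] with ω hω
  simp [hω]

theorem measurable_gridIncrement (hX : IsLevyProcess P X) (α β : ℝ) (n i : ℕ) :
    Measurable fun ω => gridIncrement (X · ω) α β n i :=
  (hX.measurable _).sub (hX.measurable _)

theorem iIndepFun_gridIncrement (hX : IsLevyProcess P X) {α β : ℝ} (hα : 0 ≤ α) (hαβ : α ≤ β)
    (n : ℕ) : iIndepFun (fun (i : Fin n) ω => gridIncrement (X · ω) α β n i) P := by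
  have h := hX.indep n (fun i => gridPoint α β n i) (fun i j hij => gridPoint_mono hαβ n hij)
    (by simpa [gridPoint] using hα)
  simpa [gridIncrement, Fin.val_succ] using h

theorem measure_gridIncrement_mem (hX : IsLevyProcess P X) {α β : ℝ} (hα : 0 ≤ α)
    (hαβ : α ≤ β) (n i : ℕ) {B : Set ℝ} (hB : MeasurableSet B) :
    P {ω | gridIncrement (X · ω) α β n i ∈ B} = P {ω | X ((β - α) / n) ω ∈ B} := by
  rw [← gridPoint_succ_sub α β n i]
  exact hX.measure_sub_mem (hα.trans (le_gridPoint hαβ))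
    (gridPoint_mono hαβ n (Nat.le_succ i)) hB

variable [IsProbabilityMeasure P]

theorem exists_forall_measure_closedBall_le (hX : IsLevyProcess P X) {α : ℝ} (hα : 0 ≤ α)
    (hatom : ∀ x, P {ω | X α ω = x} = 0) {c : ℝ≥0∞} (hc : 0 < c) :
    ∃ γ > 0, ∀ u ≥ α, ∀ x, P {ω | X u ω ∈ closedBall x γ} ≤ c := by
  have := Measure.isProbabilityMeasure_map (μ := P) (hX.measurable α).aemeasurable
  have : NullSingletonClass (P.map (X α)) := ⟨fun x => by
    rw [Measure.map_apply (hX.measurable α) (measurableSet_singleton x)]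
    exact hatom x⟩
  obtain ⟨γ, hγ, hμ⟩ := exists_pos_forall_measure_closedBall_le (P.map (X α))
    isTightMeasureSet_singleton hc
  refine ⟨γ, hγ, fun u hu x => ?_⟩
  -- `X u = X α + (X u - X α)` with independent summands
  have h := (hX.indepFun_sub hα hu).measure_mem_and_mem_le (hX.measurable α)
    ((hX.measurable u).sub (hX.measurable α)) (S := {p | p.1 + p.2 ∈ closedBall x γ})
    ((measurable_fst.add measurable_snd) measurableSet_closedBall) MeasurableSet.univ
    (c := c) fun v => ?_
  · simpa using h
  · have := hμ (x - v)
    rw [Measure.map_apply (hX.measurable α) measurableSet_closedBall] at this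
    exact le_trans (measure_mono fun ω hω => by rwa [← preimage_add_right_closedBall]) this

theorem measure_mem_closedBall_and_le_sub (hX : IsLevyProcess P X) {s t : ℝ} (hs : 0 ≤ s)
    (hst : s ≤ t) {η : ℝ} {c : ℝ≥0∞} (hconc : ∀ y, P {ω | X s ω ∈ closedBall y η} ≤ c)
    (x ρ : ℝ) :
    P {ω | (X t ω ∈ closedBall x η ∨ X s ω ∈ closedBall x η) ∧ ρ ≤ X t ω - X s ω}
      ≤ 2 * c * P {ω | ρ ≤ X (t - s) ω} := by
  have hind := hX.indepFun_sub hs hst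
  have hXs := hX.measurable s
  have hΔ := (hX.measurable t).sub hXs
  have hright := hind.measure_mem_and_mem_le hXs hΔ (S := {p | p.1 + p.2 ∈ closedBall x η})
    ((measurable_fst.add measurable_snd) measurableSet_closedBall) (measurableSet_Ici (a := ρ))
    (c := c) fun v => le_trans
      (measure_mono fun ω hω => by rwa [← preimage_add_right_closedBall]) (hconc (x - v))
  have hleft := hind.measure_mem_and_mem_le hXs hΔ (S := {p | p.1 ∈ closedBall x η})
    (measurable_fst measurableSet_closedBall) (measurableSet_Ici (a := ρ)) (c := c)
    fun _ => hconc x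
  rw [show {ω | ρ ≤ X (t - s) ω} = {ω | X (t - s) ω ∈ Ici ρ} from rfl,
    ← hX.measure_sub_mem hs hst measurableSet_Ici, two_mul, add_mul]
  refine (measure_mono fun ω hω => ?_).trans ((measure_union_le _ _).trans
    (add_le_add (by simpa using hright) (by simpa using hleft)))
  rcases hω with ⟨h | h, hρ⟩
  · exact Or.inl ⟨by simpa using h, hρ⟩
  · exact Or.inr ⟨h, hρ⟩

theorem not_tendsto_natCast_mul_measure_le_nhds_top (hX : IsLevyProcess P X) {α β ρ : ℝ}
    (hα : 0 < α) (hαβ : α ≤ β) (hρ : 0 < ρ) :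
    ¬ Tendsto (fun n : ℕ => (n : ℝ≥0∞) * P {ω | ρ ≤ X ((β - α) / n) ω}) atTop (𝓝 ∞) := by
  intro h
  set N : ℕ → Ω → ℕ := fun n ω => #{i : Fin n | gridIncrement (X · ω) α β n i ∈ Ici ρ}
  -- by independence, for every `K` it becomes unlikely to see at most `K` large increments
  have hnull : ∀ K : ℕ, P (liminf (fun n => {ω | N n ω < K + 1}) atTop) = 0 := by
    intro K
    refine le_antisymm ((measure_liminf_le_liminf_measure P _).trans_eq (Tendsto.liminf_eq ?_))
      zero_le
    refine tendsto_of_tendsto_of_tendsto_of_le_of_le tendsto_const_nhds ?_ (fun _ => zero_le)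
      fun n => measure_card_filter_mem_lt_le (hX.iIndepFun_gridIncrement hα.le hαβ n)
        measurableSet_Ici (q := 1 - P {ω | ρ ≤ X ((β - α) / n) ω}) (fun i => ?_) (K + 1)
    · simpa using ENNReal.Tendsto.const_mul (ENNReal.tendsto_one_sub_pow_div_atTop
        (fun n => prob_le_one) h K.succ_pos) (Or.inr (ENNReal.natCast_ne_top (K + 1)))
    · rw [preimage_compl, prob_compl_eq_one_sub
        (hX.measurable_gridIncrement α β n i measurableSet_Ici)]
      exact congrArg (1 - ·) (hX.measure_gridIncrement_mem hα.le hαβ n i measurableSet_Ici)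
  -- while every càdlàg path has a bounded number of them
  have hcover : (univ : Set Ω) ⊆ ⋃ K : ℕ, liminf (fun n => {ω | N n ω < K + 1}) atTop := by
    intro ω _
    obtain ⟨K, hK⟩ := exists_eventually_card_le_of_cadlag (g := (X · ω)) hαβ
      (fun t ht => hX.right_cont ω t (hα.le.trans ht.1))
      (fun t ht => ⟨_, hX.left_lim ω t (hα.trans_le ht.1)⟩) hρ
    exact mem_iUnion.2
      ⟨K, mem_liminf_iff_eventually_mem.2 (hK.mono fun n hn => Nat.lt_succ_of_le hn)⟩
  exact one_ne_zero
    (measure_univ.symm.trans (measure_mono_null hcover (measure_iUnion_null hnull)))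

theorem measure_largeIncrementNearGraph_le (hX : IsLevyProcess P X) {α β : ℝ} (hα : 0 ≤ α)
    (hαβ : α ≤ β) (f : ℝ → ℝ) (ρ : ℝ) {η : ℝ} {c : ℝ≥0∞}
    (hconc : ∀ u ≥ α, ∀ x, P {ω | X u ω ∈ closedBall x η} ≤ c) (n : ℕ) :
    P (largeIncrementNearGraph X f α β ρ η n)
      ≤ 2 * c * (n * P {ω | ρ ≤ X ((β - α) / n) ω}) := by
  calc P (largeIncrementNearGraph X f α β ρ η n)
      ≤ ∑ _i : Fin n, 2 * c * P {ω | ρ ≤ X ((β - α) / n) ω} :=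
        (measure_iUnion_fintype_le _ _).trans (Finset.sum_le_sum fun i _ => by
          rw [← gridPoint_succ_sub α β n i]
          exact hX.measure_mem_closedBall_and_le_sub (hα.trans (le_gridPoint hαβ))
            (gridPoint_mono hαβ n (Nat.le_succ i)) (hconc _ (le_gridPoint hαβ)) _ _)
    _ = 2 * c * (n * P {ω | ρ ≤ X ((β - α) / n) ω}) := by
        rw [Finset.sum_const, Finset.card_univ, Fintype.card_fin, nsmul_eq_mul]
        ring

theorem measure_iInter_liminf_largeIncrementNearGraph_eq_zero (hX : IsLevyProcess P X) {α β : ℝ}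
    (hα : 0 < α) (hαβ : α ≤ β) (hatom : ∀ x, P {ω | X α ω = x} = 0) (f : ℝ → ℝ) {ρ : ℝ}
    (hρ : 0 < ρ) :
    P (⋂ η > 0, liminf (largeIncrementNearGraph X f α β ρ η) atTop) = 0 := by
  obtain ⟨C, hC⟩ : ∃ C : ℝ≥0, ∃ᶠ n : ℕ in atTop,
      (n : ℝ≥0∞) * P {ω | ρ ≤ X ((β - α) / n) ω} ≤ C := by
    have h := hX.not_tendsto_natCast_mul_measure_le_nhds_top hα hαβ hρ
    rw [ENNReal.tendsto_nhds_top_iff_nnreal] at h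
    push Not at h
    exact h
  have hbound : ∀ c > 0, P (⋂ η > 0, liminf (largeIncrementNearGraph X f α β ρ η) atTop)
      ≤ 2 * c * C := by
    intro c hc
    obtain ⟨γ, hγ, hconc⟩ := hX.exists_forall_measure_closedBall_le hα.le hatom hc
    refine (measure_mono (biInter_subset_of_mem hγ)).trans
      ((measure_liminf_le_liminf_measure P _).trans
        (liminf_le_of_frequently_le' (hC.mono fun n hn => ?_)))
    exact (hX.measure_largeIncrementNearGraph_le hα.le hαβ f ρ hconc n).trans (by gcongr)
  have hlim : Tendsto (fun c : ℝ≥0∞ => 2 * c * C) (𝓝[>] 0) (𝓝 0) := by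
    have h : Tendsto (fun c : ℝ≥0∞ => 2 * c * C) (𝓝 0) (𝓝 (2 * 0 * C)) :=
      ENNReal.Tendsto.mul_const (ENNReal.Tendsto.const_mul tendsto_id
        (Or.inr ENNReal.ofNat_ne_top)) (Or.inr ENNReal.coe_ne_top)
    simpa using h.mono_left nhdsWithin_le_nhds
  exact le_antisymm (ge_of_tendsto hlim (eventually_nhdsWithin_of_forall hbound)) zero_le

theorem ae_forall_mem_Ioc_jump_ne_graph (hX : IsLevyProcess P X) {α β : ℝ} (hα : 0 < α)
    (hαβ : α ≤ β) (hatom : ∀ x, P {ω | X α ω = x} = 0) {f : ℝ → ℝ}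
    (hf : ContinuousOn f (Icc α β)) :
    ∀ᵐ ω ∂P, ∀ t ∈ Ioc α β, leftLim (X · ω) t < X t ω →
      X t ω ≠ f t ∧ leftLim (X · ω) t ≠ f t := by
  have hcover : {ω | ¬ ∀ t ∈ Ioc α β, leftLim (X · ω) t < X t ω →
      X t ω ≠ f t ∧ leftLim (X · ω) t ≠ f t} ⊆
      ⋃ k : ℕ, ⋂ η > 0, liminf (largeIncrementNearGraph X f α β (1 / (k + 1)) η) atTop := by
    intro ω hω
    simp only [mem_ofPred_eq, not_forall, not_and_or, not_not, exists_prop] at hω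
    obtain ⟨t, ht, hjump, hgraph⟩ := hω
    obtain ⟨k, hk⟩ := exists_nat_one_div_lt (sub_pos.2 hjump)
    refine mem_iUnion.2 ⟨k, mem_iInter₂.2 fun η hη => mem_liminf_iff_eventually_mem.2 ?_⟩
    filter_upwards [eventually_exists_gridIncrement_near_graph ht
      (hX.right_cont ω t (hα.le.trans ht.1.le)) (hX.left_lim ω t (hα.trans ht.1))
      ((hf t (Ioc_subset_Icc_self ht)).tendsto.mono_left
        (nhdsWithin_le_of_mem (Icc_mem_nhdsLT_of_mem ht))) hk hgraph hη]
      with n ⟨i, hin, hi⟩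
    exact mem_iUnion.2 ⟨⟨i, hin⟩, hi⟩
  rw [ae_iff]
  exact measure_mono_null hcover (measure_iUnion_null fun k =>
    hX.measure_iInter_liminf_largeIncrementNearGraph_eq_zero hα hαβ hatom f Nat.one_div_pos_of_nat)

theorem ae_forall_jump_ne_graph (hX : IsLevyProcess P X)
    (hatom : ∀ t > 0, ∀ x, P {ω | X t ω = x} = 0) {f : ℝ → ℝ} (hf : ContinuousOn f (Ioi 0)) :
    ∀ᵐ ω ∂P, ∀ t > 0, leftLim (X · ω) t < X t ω →
      X t ω ≠ f t ∧ leftLim (X · ω) t ≠ f t := by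
  have h : ∀ m : ℕ, ∀ᵐ ω ∂P, ∀ t ∈ Ioc (1 / (m + 1) : ℝ) (m + 1), leftLim (X · ω) t < X t ω →
      X t ω ≠ f t ∧ leftLim (X · ω) t ≠ f t := fun m =>
    hX.ae_forall_mem_Ioc_jump_ne_graph Nat.one_div_pos_of_nat
      (by rw [div_le_iff₀ (by positivity)]; nlinarith [m.cast_nonneg (α := ℝ)])
      (hatom _ Nat.one_div_pos_of_nat) (hf.mono fun t ht => Nat.one_div_pos_of_nat.trans_le ht.1)
  filter_upwards [ae_all_iff.2 h] with ω hω t ht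
  obtain ⟨m, hm⟩ := exists_nat_ge (max t t⁻¹)
  refine hω m t ⟨(one_div_lt (by positivity) ht).2 ?_, by linarith [le_max_left t t⁻¹]⟩
  rw [one_div]
  linarith [le_max_right t t⁻¹]

end IsLevyProcess

theorem levy_no_jump_on_graph_nondecreasing_general
    {Ω : Type*} [MeasurableSpace Ω] (P : Measure Ω) [IsProbabilityMeasure P]
    (X : ℝ → Ω → ℝ) (hX : IsLevyProcess P X)
    -- the law of `X_t` is atomless for each `t > 0`
    (hatomless : ∀ t : ℝ, 0 < t → ∀ x : ℝ, P {ω | X t ω = x} = 0)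
    -- `f : (0,∞) → (0,∞)` is continuous and nondecreasing, with `lim_{t→0+} f(t) > 0`
    (f : ℝ → ℝ) (hf_cont : ContinuousOn f (Ioi 0))
    (f0 : ℝ) (hf0_pos : 0 < f0) (hf_lim : Tendsto f (𝓝[>] 0) (𝓝 f0)) :
    P {ω | 0 < firstPassage f X ω} = 1 ∧
    P {ω | Function.leftLim (fun t => X t ω) (firstPassage f X ω).toReal =
          f (firstPassage f X ω).toReal ∧
        f (firstPassage f X ω).toReal < X (firstPassage f X ω).toReal ω ∧
        firstPassage f X ω < ⊤} = 0 ∧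
    P {ω | Function.leftLim (fun t => X t ω) (firstPassage f X ω).toReal <
          X (firstPassage f X ω).toReal ω ∧
        X (firstPassage f X ω).toReal ω = f (firstPassage f X ω).toReal ∧
        firstPassage f X ω < ⊤} = 0 := by
  have hT : ∀ᵐ ω ∂P, 0 < firstPassage f X ω := hX.init.mono fun ω hω =>
    firstPassage_pos hf0_pos hf_lim (by
      simpa [hω] using (hX.right_cont ω 0 le_rfl).mono_left (nhdsWithin_mono _ Ioi_subset_Ici_self))
  have hjump := hX.ae_forall_jump_ne_graph hatomless hf_cont
  refine ⟨by rw [measure_congr (ae_eq_univ.2 hT), measure_univ],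
    measure_eq_zero_iff_ae_notMem.2 ?_, measure_eq_zero_iff_ae_notMem.2 ?_⟩
  · filter_upwards [hT, hjump] with ω h0 hj ⟨heq, hlt, htop⟩
    exact (hj _ (ENNReal.toReal_pos h0.ne' htop.ne) (heq ▸ hlt)).2 heq
  · filter_upwards [hT, hjump] with ω h0 hj ⟨hlt, heq, htop⟩
    exact (hj _ (ENNReal.toReal_pos h0.ne' htop.ne) hlt).1 heq

/-- Let `X` be a real Lévy process such that `|X|` is not a subordinator and
the law of `X_t` is atomless for each `t > 0`, and let `f : (0,∞) → (0,∞)` be continuous and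
nondecreasing with `lim_{t→0+} f(t) > 0`.  Then `P(T_f > 0) = 1` and, at time `T_f`, the
process can neither jump onto the graph of `f` nor jump from it:
`P(X_{T_f−} = f(T_f) < X_{T_f}, T_f < ∞) = P(X_{T_f−} < X_{T_f} = f(T_f), T_f < ∞) = 0`. -/
theorem levy_no_jump_on_graph_nondecreasing
    {Ω : Type*} [MeasurableSpace Ω] (P : Measure Ω) [IsProbabilityMeasure P]
    (X : ℝ → Ω → ℝ) (hX : IsLevyProcess P X)
    -- `|X|` is not a subordinator
    (hnotsub₁ : ¬ ∀ᵐ ω ∂P, MonotoneOn (fun t => X t ω) (Ici (0:ℝ)))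
    (hnotsub₂ : ¬ ∀ᵐ ω ∂P, AntitoneOn (fun t => X t ω) (Ici (0:ℝ)))
    -- the law of `X_t` is atomless for each `t > 0`
    (hatomless : ∀ t : ℝ, 0 < t → ∀ x : ℝ, P {ω | X t ω = x} = 0)
    -- `f : (0,∞) → (0,∞)` is continuous and nondecreasing, with `lim_{t→0+} f(t) > 0`
    (f : ℝ → ℝ) (hf_cont : ContinuousOn f (Ioi 0)) (hf_mono : MonotoneOn f (Ioi 0))
    (hf_pos : ∀ x : ℝ, 0 < x → 0 < f x)
    (f0 : ℝ) (hf0_pos : 0 < f0) (hf_lim : Tendsto f (𝓝[>] 0) (𝓝 f0)) :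
    P {ω | 0 < firstPassage f X ω} = 1 ∧
    P {ω | Function.leftLim (fun t => X t ω) (firstPassage f X ω).toReal =
          f (firstPassage f X ω).toReal ∧
        f (firstPassage f X ω).toReal < X (firstPassage f X ω).toReal ω ∧
        firstPassage f X ω < ⊤} = 0 ∧
    P {ω | Function.leftLim (fun t => X t ω) (firstPassage f X ω).toReal <
          X (firstPassage f X ω).toReal ω ∧
        X (firstPassage f X ω).toReal ω = f (firstPassage f X ω).toReal ∧
        firstPassage f X ω < ⊤} = 0 :=
  levy_no_jump_on_graph_nondecreasing_general P X hX hatomless f hf_cont f0 hf0_pos hf_lim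

end
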